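/- Let α_t, σ_t be differentiable with α_t ≠ 0 and σ_t > 0. Then the conditional vector field u_t(x | x_0) = (σ_t'/σ_t) x + (α_t' − σ_t' α_t/σ_t) x_0 can be rewritten as u_t(x | x_0) = a_t x + b_t ∇_x log p_t(x | x_0), where a_t = α_t'/α_t, b_t = (α_t'/α_t − σ_t'/σ_t) σ_t², and p_t(x | x_0) = N(x; α_t x_0, σ_t² I). -/

import Mathlib

theorem eq_inv_smul_add_sq_smul_of_eq_neg_smul {K E : Type*} [Field K] [AddCommGroup E]
    [Module K E] {α σ : K} {x x₀ s : E} (hα : α ≠ 0) (hσ : σ ≠ 0)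
    (hs : s = -(1 / σ ^ 2) • (x - α • x₀)) :
    x₀ = α⁻¹ • (x + σ ^ 2 • s) := by
  subst hs
  match_scalars <;> field_simp
  ring

/-- Rewriting the conditional vector field via the conditional score:
`u = (σ'/σ) • x + (α' − σ'α/σ) • x₀ = a • x + b • score`, where
`a = α'/α`, `b = (α'/α − σ'/σ) σ²` and `score = −(x − α • x₀)/σ²`. -/
theorem conditional_vector_field_score_form
    {d : ℕ} (α σ α' σ' : ℝ) (hα : α ≠ 0) (hσ : 0 < σ)
    (x x₀ : EuclideanSpace ℝ (Fin d))
    (score : EuclideanSpace ℝ (Fin d))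
    (hscore : score = -(1 / σ ^ 2) • (x - α • x₀)) :
    (σ' / σ) • x + (α' - σ' * α / σ) • x₀ =
      (α' / α) • x + ((α' / α - σ' / σ) * σ ^ 2) • score := by
  rw [eq_inv_smul_add_sq_smul_of_eq_neg_smul hα hσ.ne' hscore]
  match_scalars <;> field_simp
  ring
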